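/- Let λ > 0 and r ∈ ℝ satisfy |r| ≤ t_{2/3,λ} = (48^{1/4}/3)·λ^{3/4}. Then β = 0 is a global minimizer over β ∈ ℝ of the function β ↦ (β − r)² + λ|β|^{2/3}; that is, for every β ∈ ℝ, r² ≤ (β − r)² + λ|β|^{2/3}. -/

import Mathlib

/-- The threshold value `t_{2/3,λ} = (48^{1/4}/3)·λ^{3/4}`. -/
noncomputable def t23 (lam : ℝ) : ℝ :=
  (48 : ℝ) ^ ((1 : ℝ) / 4) / 3 * lam ^ ((3 : ℝ) / 4)

/-! Write `λ = 3a⁴` with `a ≥ 0`; then `t_{2/3,λ} = 2a³`, because `48 · 3³ = 6⁴`. Substituting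
`u = |β|^{1/3}`, the claim reduces to `2|r|u³ ≤ u⁶ + 3a⁴u²`, which for `|r| ≤ 2a³` follows from
`u⁶ - 4a³u³ + 3a⁴u² = u²(u - a)²((u + a)² + 2a²) ≥ 0`. -/

lemma four_mul_pow_three_mul_pow_three_le (a u : ℝ) :
    4 * a ^ 3 * u ^ 3 ≤ u ^ 6 + 3 * a ^ 4 * u ^ 2 := by
  have h : 0 ≤ u ^ 2 * (u - a) ^ 2 * ((u + a) ^ 2 + 2 * a ^ 2) := by positivity
  linear_combination h

lemma t23_three_mul_pow_four {a : ℝ} (ha : 0 ≤ a) : t23 (3 * a ^ 4) = 2 * a ^ 3 := by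
  have h6 : (48 : ℝ) ^ ((1 : ℝ) / 4) * 3 ^ ((3 : ℝ) / 4) = 6 := by
    rw [show (3 : ℝ) / 4 = 3 * (1 / 4) by norm_num, Real.rpow_mul (by norm_num),
      ← Real.mul_rpow (by norm_num) (by norm_num),
      show (48 : ℝ) * 3 ^ (3 : ℝ) = 6 ^ (4 : ℝ) by norm_num,
      ← Real.rpow_mul (by norm_num)]
    norm_num
  have ha3 : (a ^ 4) ^ ((3 : ℝ) / 4) = a ^ 3 := by
    rw [← Real.rpow_natCast, ← Real.rpow_mul ha]
    norm_num
  rw [t23, Real.mul_rpow (by norm_num) (by positivity), ha3]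
  linear_combination a ^ 3 / 3 * h6

lemma sq_le_sub_sq_add_mul_abs_rpow_two_div_three {a r : ℝ} (hr : |r| ≤ 2 * a ^ 3) (β : ℝ) :
    r ^ 2 ≤ (β - r) ^ 2 + 3 * a ^ 4 * |β| ^ ((2 : ℝ) / 3) := by
  set u := |β| ^ ((1 : ℝ) / 3)
  have hu3 : u ^ 3 = |β| := by
    rw [← Real.rpow_natCast, ← Real.rpow_mul (abs_nonneg β)]
    norm_num
  have hu2 : u ^ 2 = |β| ^ ((2 : ℝ) / 3) := by
    rw [← Real.rpow_natCast, ← Real.rpow_mul (abs_nonneg β)]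
    norm_num
  have hβ : β ^ 2 = u ^ 6 := by rw [← sq_abs, ← hu3]; ring
  have hrβ : 2 * (r * β) ≤ 4 * a ^ 3 * u ^ 3 := by
    calc 2 * (r * β) ≤ 2 * (|r| * |β|) := by rw [← abs_mul]; gcongr; exact le_abs_self _
      _ ≤ 2 * (2 * a ^ 3 * |β|) := by gcongr
      _ = 4 * a ^ 3 * u ^ 3 := by rw [hu3]; ring
  rw [← hu2]
  linear_combination hrβ + four_mul_pow_three_mul_pow_three_le a u - hβ

theorem stmt_3 (lam r : ℝ) (hlam : 0 < lam) (hr : |r| ≤ t23 lam) :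
    ∀ β : ℝ, r ^ 2 ≤ (β - r) ^ 2 + lam * |β| ^ ((2 : ℝ) / 3) := by
  obtain ⟨a, ha, rfl⟩ : ∃ a : ℝ, 0 ≤ a ∧ lam = 3 * a ^ 4 :=
    ⟨(lam / 3) ^ ((4 : ℕ)⁻¹ : ℝ), by positivity, by
      rw [Real.rpow_inv_natCast_pow (by positivity) (by norm_num)]; ring⟩
  rw [t23_three_mul_pow_four ha] at hr
  exact sq_le_sub_sq_add_mul_abs_rpow_two_div_three hr
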